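/- Let $k_2 = \kappa + \rho\sigma\xi > 0$, $k_3 = \sigma^2(1-\rho^2)$, $k_1 = -\xi^2$, $k_4 = \sqrt{k_2^2 - k_1 k_3}$, and $\gamma, a, b, \eta_2, r, \kappa, \theta > 0$, $\eta \leq 0$. Define $g_2(t)$ as the Riccati solution $g_2(t) = \frac{k_1(e^{k_4(T-t)}-1)}{2k_4 + (k_2+k_4)(e^{k_4(T-t)}-1)}$ and $g_3(t) = -\frac{1}{2}\frac{a^2\eta_2^2}{b^2}(T-t) + \frac{a\eta\gamma}{r}(1 - e^{r(T-t)}) + \frac{2\kappa\theta}{k_3}\ln\left[\frac{2k_4 e^{\frac{1}{2}(k_2+k_4)(T-t)}}{2k_4 + (k_2+k_4)(e^{k_4(T-t)}-1)}\right]$ (assuming $k_3 > 0$). Then $g_3(T) = 0$ and $g_3'(t) + (a\eta + a\eta_2\hat q(t))g_1(t) + \frac{1}{2}b^2\hat q(t)^2 g_1(t)^2 + \kappa\theta g_2(t) = 0$, where $g_1(t) = -\gamma e^{r(T-t)}$ and $\hat q(t) = \frac{a\eta_2}{\gamma b^2}e^{-r(T-t)}$. -/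

import Mathlib

open Real Set

/-- Closed form of `g₃` in the single-risk-aversion case: terminal condition `g₃ T = 0`
and the ODE `g₃' + (aη + aη₂ q̂)g₁ + b²q̂²g₁²/2 + κθ g₂ = 0`. -/
theorem stmt_12 (ξ κ σ ρ T γ a b η η₂ r θ : ℝ)
    (hξ : 0 < ξ) (hκ : 0 < κ) (hσ : 0 < σ) (hρ : ρ ∈ Ioo (-1 : ℝ) 1)
    (hγ : 0 < γ) (ha : 0 < a) (hb : 0 < b) (hη : η ≤ 0) (hη₂ : 0 < η₂)
    (hr : 0 < r) (hθ : 0 < θ)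
    (k₁ k₂ k₃ k₄ : ℝ)
    (hk₁ : k₁ = -ξ ^ 2) (hk₂ : k₂ = κ + ρ * σ * ξ) (hk₃ : k₃ = σ ^ 2 * (1 - ρ ^ 2))
    (hk₂pos : 0 < k₂)
    (hk₄ : k₄ = Real.sqrt (k₂ ^ 2 - k₁ * k₃))
    (g₁ g₂ g₃ qhat : ℝ → ℝ)
    (hg₁ : ∀ t, g₁ t = -γ * Real.exp (r * (T - t)))
    (hg₂ : ∀ t, g₂ t =
      k₁ * (Real.exp (k₄ * (T - t)) - 1) /
        (2 * k₄ + (k₂ + k₄) * (Real.exp (k₄ * (T - t)) - 1)))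
    (hg₃ : ∀ t, g₃ t =
      -(1 / 2) * (a ^ 2 * η₂ ^ 2 / b ^ 2) * (T - t)
        + a * η * γ / r * (1 - Real.exp (r * (T - t)))
        + 2 * κ * θ / k₃ *
          Real.log (2 * k₄ * Real.exp ((1 / 2) * (k₂ + k₄) * (T - t)) /
            (2 * k₄ + (k₂ + k₄) * (Real.exp (k₄ * (T - t)) - 1))))
    (hqhat : ∀ t, qhat t = a * η₂ / (γ * b ^ 2) * Real.exp (-(r * (T - t)))) :
    g₃ T = 0 ∧
    ∀ t ∈ Icc (0 : ℝ) T,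
      HasDerivAt g₃
        (-((a * η + a * η₂ * qhat t) * g₁ t
            + (1 / 2) * b ^ 2 * qhat t ^ 2 * g₁ t ^ 2 + κ * θ * g₂ t)) t := by
  have hρ2 : ρ ^ 2 < 1 := by
    have h1 := hρ.1; have h2 := hρ.2; nlinarith
  have hk₃pos : 0 < k₃ := by
    have h1 : 0 < 1 - ρ ^ 2 := by linarith
    rw [hk₃]; positivity
  have hsq : 0 < k₂ ^ 2 - k₁ * k₃ := by
    rw [hk₁]; nlinarith [sq_nonneg ξ, hk₃pos, hk₂pos]
  have hk₄pos : 0 < k₄ := by rw [hk₄]; exact Real.sqrt_pos.mpr hsq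
  have hk₄sq : k₄ ^ 2 = k₂ ^ 2 - k₁ * k₃ := by
    rw [hk₄, sq_sqrt hsq.le]
  -- denominator
  set D : ℝ → ℝ := fun s => 2 * k₄ + (k₂ + k₄) * (Real.exp (k₄ * (T - s)) - 1) with hD
  have hDT : D T = 2 * k₄ := by simp [hD]
  constructor
  · rw [hg₃ T]
    simp [sub_self, div_self (by positivity : (2 : ℝ) * k₄ ≠ 0)]
  · intro t ht
    -- D is positive on a neighborhood of t
    have hDcont : Continuous D := by fun_prop
    have hDt : 0 < D t := by
      have h1 : 1 ≤ Real.exp (k₄ * (T - t)) := by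
        apply Real.one_le_exp; nlinarith [ht.2, hk₄pos]
      have : 0 ≤ (k₂ + k₄) * (Real.exp (k₄ * (T - t)) - 1) := by
        apply mul_nonneg (by linarith) (by linarith)
      simp only [hD]; linarith
    have hUopen : IsOpen {s : ℝ | 0 < D s} := isOpen_lt continuous_const hDcont
    have hU : ∀ᶠ s in nhds t, 0 < D s := hUopen.eventually_mem hDt
    -- rewritten form of g₃
    set C : ℝ := 2 * κ * θ / k₃ with hC
    set F : ℝ → ℝ := fun s =>
      -(1 / 2) * (a ^ 2 * η₂ ^ 2 / b ^ 2) * (T - s)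
        + a * η * γ / r * (1 - Real.exp (r * (T - s)))
        + C * (Real.log (2 * k₄) + (1 / 2) * (k₂ + k₄) * (T - s) - Real.log (D s))
      with hF
    have heq : ∀ᶠ s in nhds t, g₃ s = F s := by
      filter_upwards [hU] with s hs
      rw [hg₃ s, hF]
      have h2k₄ : (0:ℝ) < 2 * k₄ := by positivity
      rw [Real.log_div (by positivity) (ne_of_gt hs),
          Real.log_mul (ne_of_gt h2k₄) (Real.exp_ne_zero _), Real.log_exp]
    -- derivative of F at t
    have hder1 : HasDerivAt (fun s => T - s) (-1) t := by
      simpa using (hasDerivAt_id t).const_sub T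
    have hderExpR : HasDerivAt (fun s => Real.exp (r * (T - s)))
        (Real.exp (r * (T - t)) * (r * (-1))) t :=
      ((hder1.const_mul r).exp)
    have hderExpK : HasDerivAt (fun s => Real.exp (k₄ * (T - s)))
        (Real.exp (k₄ * (T - t)) * (k₄ * (-1))) t :=
      ((hder1.const_mul k₄).exp)
    have hderD : HasDerivAt D ((k₂ + k₄) * (Real.exp (k₄ * (T - t)) * (k₄ * (-1)))) t := by
      simpa [hD] using ((hderExpK.sub_const 1).const_mul (k₂ + k₄)).const_add (2 * k₄)
    have hderLogD : HasDerivAt (fun s => Real.log (D s))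
        ((k₂ + k₄) * (Real.exp (k₄ * (T - t)) * (k₄ * (-1))) / D t) t :=
      hderD.log (ne_of_gt hDt)
    have hderF : HasDerivAt F
        (-(1 / 2) * (a ^ 2 * η₂ ^ 2 / b ^ 2) * (-1)
          + a * η * γ / r * (0 - Real.exp (r * (T - t)) * (r * (-1)))
          + C * (0 + (1 / 2) * (k₂ + k₄) * (-1)
            - (k₂ + k₄) * (Real.exp (k₄ * (T - t)) * (k₄ * (-1))) / D t)) t := by
      apply HasDerivAt.add
      apply HasDerivAt.add
      · exact (hder1.const_mul _)
      · exact (((hasDerivAt_const t (1:ℝ)).sub hderExpR).const_mul _)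
      · exact ((((hasDerivAt_const t (Real.log (2 * k₄))).add
          (hder1.const_mul _)).sub hderLogD).const_mul C)
    have hgoal : HasDerivAt g₃
        (-(1 / 2) * (a ^ 2 * η₂ ^ 2 / b ^ 2) * (-1)
          + a * η * γ / r * (0 - Real.exp (r * (T - t)) * (r * (-1)))
          + C * (0 + (1 / 2) * (k₂ + k₄) * (-1)
            - (k₂ + k₄) * (Real.exp (k₄ * (T - t)) * (k₄ * (-1))) / D t)) t :=
      hderF.congr_of_eventuallyEq heq
    have hDne : D t ≠ 0 := ne_of_gt hDt
    set E := Real.exp (k₄ * (T - t)) with hE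
    set Er := Real.exp (r * (T - t)) with hEr
    have hDval : D t = 2 * k₄ + (k₂ + k₄) * (E - 1) := rfl
    have key : C * (0 + (1 / 2) * (k₂ + k₄) * (-1)
        - (k₂ + k₄) * (E * (k₄ * (-1))) / D t)
        = -(κ * θ * (k₁ * (E - 1) / D t)) := by
      have hD2 : 2 * k₄ + (k₂ + k₄) * (E - 1) ≠ 0 := by rw [← hDval]; exact hDne
      rw [hC, hDval]
      field_simp
      linear_combination (E - 1) * hk₄sq
    convert hgoal using 1
    rw [hg₁, hg₂, hqhat, key]
    rw [show Real.exp (-(r * (T - t))) = Er⁻¹ by rw [hEr, ← Real.exp_neg]]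
    have hErne : Er ≠ 0 := Real.exp_ne_zero _
    rw [← hE, ← hDval]
    field_simp
    ring
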